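/- Let (Ω, F, (F_t), Q) be a filtered probability space carrying a Brownian motion B and an F₀-measurable random variable x₀ with values in S¹, and let ω be an independent random variable with law μ. Suppose b: S¹×S¹×ℝ → ℝ is bounded and Lipschitz in its first two variables uniformly in the third, and c: S¹×ℝ → ℝ is Lipschitz in its first variable uniformly in the second with ∫ sup_x|c(x,ω)| μ(dω) < ∞. Then there is pathwise existence and uniqueness for the nonlinear (McKean–Vlasov) SDE: x_t = x₀ + ∫₀ᵗ b[x_s, P_s] ds + ∫₀ᵗ c(x_s, ω) ds + B_t, where P_t is the joint law of (x_t, ω) and b[x,m] = ∫ b(x,y,π) m(dy,dπ). -/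

import Mathlib

open MeasureTheory Real Filter

noncomputable section

/-- `x` is a solution of the nonlinear (McKean–Vlasov) SDE
`x_t = x₀ + ∫₀ᵗ b[x_s, P_s] ds + ∫₀ᵗ c(x_s, ω) ds + B_t`, where
`P_s = Law(x_s, ω)` (the circle is represented by 2π-periodic coefficients on ℝ). -/
def IsNonlinearSol {Ω : Type*} [MeasurableSpace Ω] (Q : Measure Ω) (T : ℝ)
    (b : ℝ → ℝ → ℝ → ℝ) (c : ℝ → ℝ → ℝ) (B : ℝ → Ω → ℝ) (x₀ : Ω → ℝ) (dis : Ω → ℝ)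
    (x : ℝ → Ω → ℝ) : Prop :=
  (∀ t, Measurable (x t)) ∧ (∀ η, Continuous fun t => x t η) ∧
  ∀ᵐ η ∂Q, ∀ t ∈ Set.Icc (0:ℝ) T,
    x t η = x₀ η
      + (∫ s in (0:ℝ)..t,
          ∫ q : ℝ × ℝ, b (x s η) q.1 q.2 ∂(Q.map fun η' => (x s η', dis η')))
      + (∫ s in (0:ℝ)..t, c (x s η) (dis η)) + B t η

end

open Topology Set
open scoped NNReal Nat

/-!
Write the equation as `x = x₀ + ∫₀ᵗ F(x_s) ds + B` with the drift
`F u η = ∫ b(u η, u η', ω η') dQ(η') + c(u η, ω η)`. This drift is dominated by the integrable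
function `Cb + S(ω)` and satisfies the mean-field Lipschitz bound
`|F u - F v|(η) ≤ L (|u - v|(η) + E|u - v|)`, so Picard iteration works path by path once the
distance between two processes is measured against a random weight `W` with `L (W + E W) ≤ Λ W`.
By induction, the distance between consecutive iterates (or between two solutions) is at most
`W(η) (Λ t)ⁿ / n!`. The iterates therefore converge uniformly on `[0, T]` for every `η` to a
continuous, measurable solution, and two solutions coincide almost surely.
-/

namespace McKeanVlasov

variable {Ω : Type*}

noncomputable def picardStep (F : (Ω → ℝ) → Ω → ℝ) (x₀ : Ω → ℝ) (B : ℝ → Ω → ℝ)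
    (u : ℝ → Ω → ℝ) : ℝ → Ω → ℝ :=
  fun t η => x₀ η + (∫ s in (0:ℝ)..t, F (u s) η) + B t η

noncomputable def picardIter (F : (Ω → ℝ) → Ω → ℝ) (x₀ : Ω → ℝ) (B : ℝ → Ω → ℝ) (n : ℕ) :
    ℝ → Ω → ℝ :=
  (picardStep F x₀ B)^[n] fun t η => x₀ η + B t η

theorem picardIter_succ (F : (Ω → ℝ) → Ω → ℝ) (x₀ : Ω → ℝ) (B : ℝ → Ω → ℝ) (n : ℕ) :
    picardIter F x₀ B (n + 1) = picardStep F x₀ B (picardIter F x₀ B n) :=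
  Function.iterate_succ_apply' _ _ _

theorem exists_abs_sub_le_tsum {u : ℕ → ℝ → Ω → ℝ} {W : Ω → ℝ} {a : ℕ → ℝ} (ha : Summable a)
    (hua : ∀ n t η, |u (n + 1) t η - u n t η| ≤ W η * a n) :
    ∃ x : ℝ → Ω → ℝ, ∀ n t η, |u n t η - x t η| ≤ W η * ∑' k, a (k + n) := by
  have hdist : ∀ t η n, dist (u n t η) (u (n + 1) t η) ≤ W η * a n := fun t η n => by
    rw [dist_comm, Real.dist_eq]; exact hua n t η
  refine ⟨fun t η => limUnder atTop fun n => u n t η, fun n t η => ?_⟩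
  have hlim := (cauchySeq_of_dist_le_of_summable _ (hdist t η) (ha.mul_left _)).tendsto_limUnder
  have h := dist_le_tsum_of_dist_le_of_tendsto _ (hdist t η) (ha.mul_left _) hlim n
  rw [Real.dist_eq, tsum_mul_left] at h
  simpa only [add_comm n] using h

theorem mul_integral_pow_div_factorial (Λ t : ℝ) (n : ℕ) :
    Λ * ∫ s in (0:ℝ)..t, (Λ * s) ^ n / n ! = (Λ * t) ^ (n + 1) / (n + 1)! := by
  simp_rw [mul_pow, div_eq_mul_inv, mul_assoc]
  rw [intervalIntegral.integral_const_mul, intervalIntegral.integral_mul_const, integral_pow,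
    Nat.factorial_succ]
  push_cast
  field_simp
  ring

theorem tendsto_of_abs_sub_le_mul {f ε : ℕ → ℝ} {y C : ℝ} (hε : Tendsto ε atTop (𝓝 0))
    (h : ∀ n, |f n - y| ≤ C * ε n) : Tendsto f atTop (𝓝 y) :=
  tendsto_iff_norm_sub_tendsto_zero.2
    (squeeze_zero (fun _ => norm_nonneg _) h (by simpa using hε.const_mul C))

variable [MeasurableSpace Ω]

def IsRegularProcess (u : ℝ → Ω → ℝ) : Prop :=
  (∀ t, Measurable (u t)) ∧ ∀ η, Continuous fun t => u t η

/-- `F u η` is the drift at the sample point `η` when the state of the whole system is the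
random variable `u`; it depends on `u` through `u η` and through the law of `u`. -/
structure IsMeanFieldDrift (Q : Measure Ω) (F : (Ω → ℝ) → Ω → ℝ) (M : Ω → ℝ) (L : ℝ≥0) :
    Prop where
  integrable_bound : Integrable M Q
  abs_le : ∀ u η, |F u η| ≤ M η
  abs_sub_le : ∀ u v, Measurable u → Measurable v → Integrable (fun η => u η - v η) Q → ∀ η,
    |F u η - F v η| ≤ L * (|u η - v η| + ∫ η', |u η' - v η'| ∂Q)
  continuous : ∀ u, IsRegularProcess u → ∀ η, Continuous fun s => F (u s) η
  measurable : ∀ u, IsRegularProcess u → Measurable fun p : ℝ × Ω => F (u p.1) p.2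

theorem IsRegularProcess.comp_continuous {u : ℝ → Ω → ℝ} (hu : IsRegularProcess u) {f : ℝ → ℝ}
    (hf : Continuous f) : IsRegularProcess fun t => u (f t) :=
  ⟨fun t => hu.1 (f t), fun η => (hu.2 η).comp hf⟩

theorem IsRegularProcess.of_abs_sub_le {u : ℕ → ℝ → Ω → ℝ} (hu : ∀ n, IsRegularProcess (u n))
    {x : ℝ → Ω → ℝ} {W : Ω → ℝ} {ε : ℕ → ℝ} (hε : Tendsto ε atTop (𝓝 0))
    (hux : ∀ n t η, |u n t η - x t η| ≤ W η * ε n) : IsRegularProcess x := by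
  have hunif : ∀ η, TendstoUniformly (fun n t => u n t η) (fun t => x t η) atTop := by
    intro η
    have hWε : Tendsto (fun n => W η * ε n) atTop (𝓝 0) := by
      simpa using hε.const_mul (W η)
    rw [Metric.tendstoUniformly_iff]
    intro δ hδ
    filter_upwards [hWε.eventually (gt_mem_nhds hδ)] with n hn t
    rw [dist_comm, Real.dist_eq]
    exact (hux n t η).trans_lt hn
  refine ⟨fun t => measurable_of_tendsto_metrizable (fun n => (hu n).1 t) ?_, fun η =>
    (hunif η).continuous (Eventually.of_forall fun n => (hu n).2 η).frequently⟩
  exact tendsto_pi_nhds.2 fun η => (hunif η).tendsto_at t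

section Picard

variable {Q : Measure Ω} {F : (Ω → ℝ) → Ω → ℝ} {M : Ω → ℝ} {L : ℝ≥0} {x₀ : Ω → ℝ}
  {B : ℝ → Ω → ℝ}

theorem IsMeanFieldDrift.bound_nonneg (hF : IsMeanFieldDrift Q F M L) (η : Ω) : 0 ≤ M η :=
  (abs_nonneg _).trans (hF.abs_le 0 η)

theorem IsMeanFieldDrift.measurable_intervalIntegral (hF : IsMeanFieldDrift Q F M L)
    {u : ℝ → Ω → ℝ} (hu : IsRegularProcess u) (t : ℝ) :
    Measurable fun η => ∫ s in (0:ℝ)..t, F (u s) η := by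
  have h : StronglyMeasurable (Function.uncurry fun η s => F (u s) η) :=
    ((hF.measurable u hu).comp measurable_swap).stronglyMeasurable
  -- an interval integral is by definition a difference of two set integrals
  exact h.integral_prod_right.measurable.sub h.integral_prod_right.measurable

theorem IsRegularProcess.picardStep {u : ℝ → Ω → ℝ} (hu : IsRegularProcess u)
    (hF : IsMeanFieldDrift Q F M L) (hx₀ : Measurable x₀) (hB : IsRegularProcess B) :
    IsRegularProcess (picardStep F x₀ B u) :=
  ⟨fun t => (hx₀.add (hF.measurable_intervalIntegral hu t)).add (hB.1 t), fun η =>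
    (continuous_const.add (intervalIntegral.continuous_primitive
      (fun _ _ => (hF.continuous u hu η).intervalIntegrable _ _) 0)).add (hB.2 η)⟩

theorem isRegularProcess_picardIter (hF : IsMeanFieldDrift Q F M L) (hx₀ : Measurable x₀)
    (hB : IsRegularProcess B) (n : ℕ) : IsRegularProcess (picardIter F x₀ B n) := by
  induction n with
  | zero => exact ⟨fun t => hx₀.add (hB.1 t), fun η => continuous_const.add (hB.2 η)⟩
  | succ n ih => rw [picardIter_succ]; exact ih.picardStep hF hx₀ hB

theorem abs_picardStep_sub_le (hF : IsMeanFieldDrift Q F M L) (u : ℝ → Ω → ℝ) {t : ℝ}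
    (ht : 0 ≤ t) (η : Ω) : |picardStep F x₀ B u t η - (x₀ η + B t η)| ≤ t * M η := by
  have h := intervalIntegral.norm_integral_le_of_norm_le_const (a := 0) (b := t) (C := M η)
    fun s _ => by rw [Real.norm_eq_abs]; exact hF.abs_le (u s) η
  rw [sub_zero, abs_of_nonneg ht, mul_comm] at h
  simpa [picardStep] using h

theorem picardStep_sub_picardStep (hF : IsMeanFieldDrift Q F M L) {u v : ℝ → Ω → ℝ}
    (hu : IsRegularProcess u) (hv : IsRegularProcess v) (t : ℝ) (η : Ω) :
    picardStep F x₀ B u t η - picardStep F x₀ B v t η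
      = ∫ s in (0:ℝ)..t, (F (u s) η - F (v s) η) := by
  rw [intervalIntegral.integral_sub ((hF.continuous u hu η).intervalIntegrable _ _)
    ((hF.continuous v hv η).intervalIntegrable _ _)]
  simp only [picardStep]
  ring


theorem abs_picardStep_sub_picardStep_le (hF : IsMeanFieldDrift Q F M L) {u v : ℝ → Ω → ℝ}
    (hu : IsRegularProcess u) (hv : IsRegularProcess v) {W : Ω → ℝ} (hW : Integrable W Q)
    {g : ℝ → ℝ} (hg : Continuous g) {t : ℝ} (ht : 0 ≤ t)
    (hae : ∀ s ∈ Icc 0 t, ∀ᵐ η' ∂Q, |u s η' - v s η'| ≤ W η' * g s) {η : Ω}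
    (hη : ∀ s ∈ Icc 0 t, |u s η - v s η| ≤ W η * g s) :
    |picardStep F x₀ B u t η - picardStep F x₀ B v t η|
      ≤ L * (W η + ∫ η', W η' ∂Q) * ∫ s in (0:ℝ)..t, g s := by
  have hpoint : ∀ s ∈ Icc 0 t,
      |F (u s) η - F (v s) η| ≤ L * (W η + ∫ η', W η' ∂Q) * g s := by
    intro s hs
    have hint : Integrable (fun η' => u s η' - v s η') Q :=
      (hW.mul_const (g s)).mono' ((hu.1 s).sub (hv.1 s)).aestronglyMeasurable
        (by simpa only [Real.norm_eq_abs] using hae s hs)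
    have hmean : ∫ η', |u s η' - v s η'| ∂Q ≤ (∫ η', W η' ∂Q) * g s := by
      rw [← integral_mul_const]
      exact integral_mono_ae hint.abs (hW.mul_const _) (hae s hs)
    calc |F (u s) η - F (v s) η|
        ≤ L * (|u s η - v s η| + ∫ η', |u s η' - v s η'| ∂Q) :=
          hF.abs_sub_le _ _ (hu.1 s) (hv.1 s) hint η
      _ ≤ L * (W η * g s + (∫ η', W η' ∂Q) * g s) := by gcongr; exact hη s hs
      _ = L * (W η + ∫ η', W η' ∂Q) * g s := by ring
  rw [picardStep_sub_picardStep hF hu hv, ← intervalIntegral.integral_const_mul]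
  refine (intervalIntegral.abs_integral_le_integral_abs ht).trans
    (intervalIntegral.integral_mono_on ht ?_ ((continuous_const.mul hg).intervalIntegrable _ _)
      hpoint)
  exact ((hF.continuous u hu η).sub (hF.continuous v hv η)).abs.intervalIntegrable _ _

/-- With `l = ⊤` this bounds Picard iterates at every sample point, with `l = ae Q` it bounds two
solutions that satisfy the equation only almost surely. -/
theorem eventually_abs_sub_le_pow_div_factorial {l : Filter Ω} (hl : ae Q ≤ l)
    (hF : IsMeanFieldDrift Q F M L) {W : Ω → ℝ} (hW : Integrable W Q) {Λ : ℝ} (hΛ : 0 ≤ Λ)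
    (hWΛ : ∀ η, L * (W η + ∫ η', W η' ∂Q) ≤ Λ * W η) {T : ℝ} {u v : ℕ → ℝ → Ω → ℝ}
    (hu : ∀ n, IsRegularProcess (u n)) (hv : ∀ n, IsRegularProcess (v n))
    (hu_succ : ∀ n, ∀ᶠ η in l, ∀ t ∈ Icc 0 T, u (n + 1) t η = picardStep F x₀ B (u n) t η)
    (hv_succ : ∀ n, ∀ᶠ η in l, ∀ t ∈ Icc 0 T, v (n + 1) t η = picardStep F x₀ B (v n) t η)
    (h0 : ∀ᶠ η in l, ∀ t ∈ Icc 0 T, |u 0 t η - v 0 t η| ≤ W η) (n : ℕ) :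
    ∀ᶠ η in l, ∀ t ∈ Icc 0 T, |u n t η - v n t η| ≤ W η * ((Λ * t) ^ n / n !) := by
  induction n with
  | zero => simpa using h0
  | succ n ih =>
    have ih_ae : ∀ s ∈ Icc 0 T, ∀ᵐ η ∂Q, |u n s η - v n s η| ≤ W η * ((Λ * s) ^ n / n !) :=
      fun s hs => (ih.filter_mono hl).mono fun η hη => hη s hs
    filter_upwards [ih, hu_succ n, hv_succ n] with η hη hηu hηv t ht
    have hsub : Icc 0 t ⊆ Icc 0 T := Icc_subset_Icc_right ht.2
    have hg : 0 ≤ ∫ s in (0:ℝ)..t, (Λ * s) ^ n / n ! :=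
      intervalIntegral.integral_nonneg ht.1 fun s hs => by have := hs.1; positivity
    rw [hηu t ht, hηv t ht]
    calc _ ≤ L * (W η + ∫ η', W η' ∂Q) * ∫ s in (0:ℝ)..t, (Λ * s) ^ n / n ! :=
          abs_picardStep_sub_picardStep_le hF (hu n) (hv n) hW (by fun_prop) ht.1
            (fun s hs => ih_ae s (hsub hs)) (fun s hs => hη s (hsub hs))
      _ ≤ Λ * W η * ∫ s in (0:ℝ)..t, (Λ * s) ^ n / n ! :=
          mul_le_mul_of_nonneg_right (hWΛ η) hg
      _ = W η * ((Λ * t) ^ (n + 1) / (n + 1)!) := by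
          rw [mul_comm Λ, mul_assoc, mul_integral_pow_div_factorial]

-- `W = m + E m` with `m = 2 T M`: its mean `2 E m` is at most twice each of its values.
theorem IsMeanFieldDrift.exists_weight [IsProbabilityMeasure Q] (hF : IsMeanFieldDrift Q F M L)
    {T : ℝ} (hT : 0 ≤ T) : ∃ W : Ω → ℝ, Integrable W Q ∧
      (∀ η, L * (W η + ∫ η', W η' ∂Q) ≤ 3 * L * W η) ∧ ∀ η, 2 * T * M η ≤ W η := by
  have hm : Integrable (fun η => 2 * T * M η) Q := hF.integrable_bound.const_mul _
  have hI : 0 ≤ ∫ η, 2 * T * M η ∂Q :=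
    integral_nonneg fun η => by have := hF.bound_nonneg η; positivity
  refine ⟨fun η => 2 * T * M η + ∫ η', 2 * T * M η' ∂Q, hm.add (integrable_const _),
    fun η => ?_, fun η => le_add_of_nonneg_right hI⟩
  rw [integral_add hm (integrable_const _), integral_const, probReal_univ, one_smul]
  have : 0 ≤ (L : ℝ) * (T * M η) := by have := hF.bound_nonneg η; positivity
  linarith

theorem abs_picardIter_succ_sub_le (hF : IsMeanFieldDrift Q F M L) (hx₀ : Measurable x₀)
    (hB : IsRegularProcess B) {T : ℝ} (hT : 0 ≤ T) {W : Ω → ℝ} (hW : Integrable W Q) {Λ : ℝ}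
    (hΛ : 0 ≤ Λ) (hWΛ : ∀ η, L * (W η + ∫ η', W η' ∂Q) ≤ Λ * W η)
    (hMW : ∀ η, T * M η ≤ W η) (n : ℕ) (η : Ω) {t : ℝ} (ht : t ∈ Icc 0 T) :
    |picardIter F x₀ B (n + 1) t η - picardIter F x₀ B n t η| ≤ W η * ((Λ * T) ^ n / n !) := by
  have hPsucc := picardIter_succ F x₀ B
  have h0 : ∀ η, ∀ t ∈ Icc 0 T, |picardIter F x₀ B 1 t η - picardIter F x₀ B 0 t η| ≤ W η :=
    fun η t ht => (abs_picardStep_sub_le hF _ ht.1 η).trans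
      ((mul_le_mul_of_nonneg_right ht.2 (hF.bound_nonneg η)).trans (hMW η))
  have h := eventually_abs_sub_le_pow_div_factorial le_top hF hW hΛ hWΛ
    (u := fun n => picardIter F x₀ B (n + 1)) (v := picardIter F x₀ B)
    (fun n => isRegularProcess_picardIter hF hx₀ hB _) (isRegularProcess_picardIter hF hx₀ hB)
    (fun n => Eventually.of_forall fun η t _ => by rw [hPsucc (n + 1)])
    (fun n => Eventually.of_forall fun η t _ => by rw [hPsucc n])
    (Eventually.of_forall h0) n
  have hW0 : 0 ≤ W η := (mul_nonneg hT (hF.bound_nonneg η)).trans (hMW η)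
  have := ht.1
  exact (eventually_top.1 h η t ht).trans (mul_le_mul_of_nonneg_left
    (div_le_div_of_nonneg_right (by gcongr; exact ht.2) (by positivity)) hW0)

theorem tendsto_picardStep (hF : IsMeanFieldDrift Q F M L) {u : ℕ → ℝ → Ω → ℝ}
    (hu : ∀ n, IsRegularProcess (u n)) {x : ℝ → Ω → ℝ} (hx : IsRegularProcess x)
    {W : Ω → ℝ} (hW : Integrable W Q) {ε : ℕ → ℝ} (hε : Tendsto ε atTop (𝓝 0)) {t : ℝ}
    (ht : 0 ≤ t) (hux : ∀ n, ∀ s ∈ Icc 0 t, ∀ η, |u n s η - x s η| ≤ W η * ε n) (η : Ω) :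
    Tendsto (fun n => picardStep F x₀ B (u n) t η) atTop (𝓝 (picardStep F x₀ B x t η)) := by
  refine tendsto_of_abs_sub_le_mul (C := L * (W η + ∫ η', W η' ∂Q) * t) hε fun n => ?_
  have h := abs_picardStep_sub_picardStep_le (x₀ := x₀) (B := B) hF (hu n) hx hW
    (g := fun _ => ε n) continuous_const ht
    (fun s hs => ae_of_all _ fun η' => hux n s hs η') (fun s hs => hux n s hs η)
  rwa [intervalIntegral.integral_const, smul_eq_mul, sub_zero, ← mul_assoc] at h

theorem exists_eq_picardStep [IsProbabilityMeasure Q] (hF : IsMeanFieldDrift Q F M L)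
    (hx₀ : Measurable x₀) (hB : IsRegularProcess B) {T : ℝ} (hT : 0 ≤ T) :
    ∃ x, IsRegularProcess x ∧ ∀ η, ∀ t ∈ Icc 0 T, x t η = picardStep F x₀ B x t η := by
  obtain ⟨W, hW, hWΛ, hMW⟩ := hF.exists_weight hT
  have hPreg := isRegularProcess_picardIter hF hx₀ hB
  set a : ℕ → ℝ := fun n => ((3 * L * T) ^ n / n !)
  -- the iterates are frozen outside `[0, T]`, where the estimates hold
  obtain ⟨x, hx⟩ := exists_abs_sub_le_tsum
    (u := fun n t η => picardIter F x₀ B n (projIcc 0 T hT t) η)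
    (Real.summable_pow_div_factorial _) fun n t η =>
      abs_picardIter_succ_sub_le hF hx₀ hB hT hW (by positivity) hWΛ
        (fun η => by nlinarith [hMW η, hF.bound_nonneg η]) n η (projIcc 0 T hT t).2
  set tail : ℕ → ℝ := fun n => ∑' k, a (k + n)
  have htail : Tendsto tail atTop (𝓝 0) := tendsto_sum_nat_add a
  have hxreg : IsRegularProcess x := IsRegularProcess.of_abs_sub_le
    (fun n => (hPreg n).comp_continuous (continuous_subtype_val.comp continuous_projIcc)) htail hx
  have hPx : ∀ n, ∀ s ∈ Icc 0 T, ∀ η, |picardIter F x₀ B n s η - x s η| ≤ W η * tail n :=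
    fun n s hs η => by simpa [projIcc_of_mem hT hs] using hx n s η
  refine ⟨x, hxreg, fun η t ht => tendsto_nhds_unique
    (tendsto_of_abs_sub_le_mul (htail.comp (tendsto_add_atTop_nat 1))
      fun n => hPx (n + 1) t ht η) ?_⟩
  simp_rw [picardIter_succ]
  exact tendsto_picardStep hF hPreg hxreg hW htail ht.1
    (fun n s hs => hPx n s ⟨hs.1, hs.2.trans ht.2⟩) η

theorem ae_eq_of_eq_picardStep [IsProbabilityMeasure Q] (hF : IsMeanFieldDrift Q F M L) {T : ℝ}
    (hT : 0 ≤ T) {x y : ℝ → Ω → ℝ} (hx : IsRegularProcess x) (hy : IsRegularProcess y)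
    (hxe : ∀ᵐ η ∂Q, ∀ t ∈ Icc 0 T, x t η = picardStep F x₀ B x t η)
    (hye : ∀ᵐ η ∂Q, ∀ t ∈ Icc 0 T, y t η = picardStep F x₀ B y t η) :
    ∀ᵐ η ∂Q, ∀ t ∈ Icc 0 T, x t η = y t η := by
  obtain ⟨W, hW, hWΛ, hMW⟩ := hF.exists_weight hT
  have h0 : ∀ᵐ η ∂Q, ∀ t ∈ Icc 0 T, |x t η - y t η| ≤ W η := by
    filter_upwards [hxe, hye] with η hxη hyη t ht
    have := hF.bound_nonneg η
    calc |x t η - y t η|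
        ≤ |picardStep F x₀ B x t η - (x₀ η + B t η)|
          + |(x₀ η + B t η) - picardStep F x₀ B y t η| := by
          rw [hxη t ht, hyη t ht]
          exact abs_sub_le _ _ _
      _ ≤ t * M η + t * M η := add_le_add (abs_picardStep_sub_le hF x ht.1 η)
          ((abs_sub_comm _ _).trans_le (abs_picardStep_sub_le hF y ht.1 η))
      _ ≤ W η := by nlinarith [ht.2, hMW η]
  have hn := eventually_abs_sub_le_pow_div_factorial le_rfl hF hW (by positivity) hWΛ
    (u := fun _ => x) (v := fun _ => y) (fun _ => hx) (fun _ => hy) (fun _ => hxe) (fun _ => hye) h0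
  filter_upwards [ae_all_iff.2 hn] with η hη t ht
  have hlim : Tendsto (fun n => W η * ((3 * L * t) ^ n / n !)) atTop (𝓝 0) := by
    simpa using (FloorSemiring.tendsto_pow_div_factorial_atTop (3 * L * t)).const_mul (W η)
  exact sub_eq_zero.1 (abs_nonpos_iff.1
    (ge_of_tendsto hlim (Eventually.of_forall fun n => hη n t ht)))

end Picard

-- `b[u η, Law(u, ω)] + c(u η, ω η)`, with the integral against the law written on `Ω`.
noncomputable def meanFieldDrift (Q : Measure Ω) (b : ℝ → ℝ → ℝ → ℝ) (c : ℝ → ℝ → ℝ)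
    (dis : Ω → ℝ) (u : Ω → ℝ) (η : Ω) : ℝ :=
  (∫ η', b (u η) (u η') (dis η') ∂Q) + c (u η) (dis η)

section MeanField

variable {Q : Measure Ω} [IsProbabilityMeasure Q] {b : ℝ → ℝ → ℝ → ℝ} {c : ℝ → ℝ → ℝ}
  {dis : Ω → ℝ} {K : ℝ≥0} {Cb : ℝ}

theorem continuous_of_abs_sub_le (hcLip : ∀ w x x', |c x w - c x' w| ≤ K * |x - x'|) (w : ℝ) :
    Continuous fun x => c x w :=
  (LipschitzWith.of_dist_le_mul fun x x' => by simpa [Real.dist_eq] using hcLip w x x').continuous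

theorem abs_integral_le_of_forall_abs_le {f : Ω → ℝ} {C : ℝ} (h : ∀ η, |f η| ≤ C) :
    |∫ η, f η ∂Q| ≤ C := by
  simpa [Real.norm_eq_abs] using
    norm_integral_le_of_norm_le_const (μ := Q) (f := f) (C := C) (ae_of_all _ h)

theorem integrable_interaction (hbbd : ∀ x y w, |b x y w| ≤ Cb)
    (hbmeas : Measurable fun q : ℝ × ℝ × ℝ => b q.1 q.2.1 q.2.2) (hdis : Measurable dis)
    (z : ℝ) {v : Ω → ℝ} (hv : Measurable v) : Integrable (fun η' => b z (v η') (dis η')) Q :=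
  (integrable_const Cb).mono'
    (hbmeas.comp (measurable_const.prodMk (hv.prodMk hdis))).aestronglyMeasurable
    (ae_of_all _ fun _ => hbbd _ _ _)

theorem continuous_integral_interaction (hbbd : ∀ x y w, |b x y w| ≤ Cb)
    (hbLip : ∀ w x x' y y', |b x y w - b x' y' w| ≤ K * (|x - x'| + |y - y'|))
    (hbmeas : Measurable fun q : ℝ × ℝ × ℝ => b q.1 q.2.1 q.2.2) (hdis : Measurable dis)
    {u : ℝ → Ω → ℝ} (hu : IsRegularProcess u) :
    Continuous fun p : ℝ × ℝ => ∫ η', b p.1 (u p.2 η') (dis η') ∂Q := by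
  refine continuous_prod_of_continuous_lipschitzWith _ K (fun z => ?_) (fun s => ?_)
  · refine continuous_of_dominated
      (fun s => (integrable_interaction hbbd hbmeas hdis z (hu.1 s)).aestronglyMeasurable)
      (fun s => ae_of_all _ fun η' => (Real.norm_eq_abs _).trans_le (hbbd _ _ _))
      (integrable_const Cb) (ae_of_all _ fun η' => ?_)
    have hy : LipschitzWith K fun y => b z y (dis η') := LipschitzWith.of_dist_le_mul
      fun y y' => by simpa [Real.dist_eq] using hbLip (dis η') z z y y'
    exact hy.continuous.comp (hu.2 η')
  · refine LipschitzWith.of_dist_le_mul fun z z' => ?_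
    rw [Real.dist_eq, Real.dist_eq, ← integral_sub
      (integrable_interaction hbbd hbmeas hdis z (hu.1 s))
      (integrable_interaction hbbd hbmeas hdis z' (hu.1 s))]
    exact abs_integral_le_of_forall_abs_le fun η' => by
      simpa using hbLip (dis η') z z' (u s η') (u s η')

theorem abs_meanFieldDrift_le (hbbd : ∀ x y w, |b x y w| ≤ Cb) {S : ℝ → ℝ}
    (hS : ∀ x w, |c x w| ≤ S w) (u : Ω → ℝ) (η : Ω) :
    |meanFieldDrift Q b c dis u η| ≤ Cb + S (dis η) :=
  (abs_add_le _ _).trans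
    (add_le_add (abs_integral_le_of_forall_abs_le fun _ => hbbd _ _ _) (hS _ _))

theorem abs_meanFieldDrift_sub_le (hbbd : ∀ x y w, |b x y w| ≤ Cb)
    (hbLip : ∀ w x x' y y', |b x y w - b x' y' w| ≤ K * (|x - x'| + |y - y'|))
    (hbmeas : Measurable fun q : ℝ × ℝ × ℝ => b q.1 q.2.1 q.2.2)
    (hcLip : ∀ w x x', |c x w - c x' w| ≤ K * |x - x'|) (hdis : Measurable dis)
    {u v : Ω → ℝ} (hu : Measurable u) (hv : Measurable v)
    (huv : Integrable (fun η => u η - v η) Q) (η : Ω) :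
    |meanFieldDrift Q b c dis u η - meanFieldDrift Q b c dis v η|
      ≤ 2 * K * (|u η - v η| + ∫ η', |u η' - v η'| ∂Q) := by
  have hI : 0 ≤ ∫ η', |u η' - v η'| ∂Q := integral_nonneg fun _ => abs_nonneg _
  have hb : |(∫ η', b (u η) (u η') (dis η') ∂Q) - ∫ η', b (v η) (v η') (dis η') ∂Q|
      ≤ K * (|u η - v η| + ∫ η', |u η' - v η'| ∂Q) := by
    rw [← integral_sub (integrable_interaction hbbd hbmeas hdis _ hu)
      (integrable_interaction hbbd hbmeas hdis _ hv)]
    calc _ ≤ ∫ η', K * (|u η - v η| + |u η' - v η'|) ∂Q :=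
          (abs_integral_le_integral_abs).trans (integral_mono_of_nonneg
            (ae_of_all _ fun _ => abs_nonneg _)
            (((integrable_const _).add huv.abs).const_mul _)
            (ae_of_all _ fun _ => hbLip _ _ _ _ _))
      _ = K * (|u η - v η| + ∫ η', |u η' - v η'| ∂Q) := by
          rw [integral_const_mul, integral_add (integrable_const _) huv.abs, integral_const,
            probReal_univ, one_smul]
  have hKI : 0 ≤ (K : ℝ) * ∫ η', |u η' - v η'| ∂Q := by positivity
  calc _ ≤ |(∫ η', b (u η) (u η') (dis η') ∂Q) - ∫ η', b (v η) (v η') (dis η') ∂Q|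
        + |c (u η) (dis η) - c (v η) (dis η)| := by
        rw [meanFieldDrift, meanFieldDrift, add_sub_add_comm]; exact abs_add_le _ _
    _ ≤ K * (|u η - v η| + ∫ η', |u η' - v η'| ∂Q) + K * |u η - v η| := add_le_add hb (hcLip _ _ _)
    _ ≤ 2 * K * (|u η - v η| + ∫ η', |u η' - v η'| ∂Q) := by linarith

theorem isMeanFieldDrift_meanFieldDrift (hbbd : ∀ x y w, |b x y w| ≤ Cb)
    (hbLip : ∀ w x x' y y', |b x y w - b x' y' w| ≤ K * (|x - x'| + |y - y'|))
    (hbmeas : Measurable fun q : ℝ × ℝ × ℝ => b q.1 q.2.1 q.2.2)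
    (hcLip : ∀ w x x', |c x w - c x' w| ≤ K * |x - x'|) (hcmeas : Measurable (Function.uncurry c))
    {S : ℝ → ℝ} (hS : ∀ x w, |c x w| ≤ S w) (hdis : Measurable dis)
    (hSint : Integrable (fun η => S (dis η)) Q) :
    IsMeanFieldDrift Q (meanFieldDrift Q b c dis) (fun η => Cb + S (dis η)) (2 * K) where
  integrable_bound := (integrable_const Cb).add hSint
  abs_le := abs_meanFieldDrift_le hbbd hS
  abs_sub_le u v hu hv huv η := by
    push_cast
    exact abs_meanFieldDrift_sub_le hbbd hbLip hbmeas hcLip hdis hu hv huv η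
  continuous u hu η := ((continuous_integral_interaction hbbd hbLip hbmeas hdis hu).comp
    ((hu.2 η).prodMk continuous_id)).add ((continuous_of_abs_sub_le hcLip (dis η)).comp (hu.2 η))
  measurable u hu := by
    have huu : Measurable (Function.uncurry u) :=
      measurable_uncurry_of_continuous_of_measurable hu.2 hu.1
    exact ((continuous_integral_interaction hbbd hbLip hbmeas hdis hu).measurable.comp
      (huu.prodMk measurable_fst)).add (hcmeas.comp (huu.prodMk (hdis.comp measurable_snd)))

theorem intervalIntegral_meanFieldDrift (hbbd : ∀ x y w, |b x y w| ≤ Cb)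
    (hbLip : ∀ w x x' y y', |b x y w - b x' y' w| ≤ K * (|x - x'| + |y - y'|))
    (hbmeas : Measurable fun q : ℝ × ℝ × ℝ => b q.1 q.2.1 q.2.2)
    (hcLip : ∀ w x x', |c x w - c x' w| ≤ K * |x - x'|) (hdis : Measurable dis)
    {u : ℝ → Ω → ℝ} (hu : IsRegularProcess u) (t : ℝ) (η : Ω) :
    ∫ s in (0:ℝ)..t, meanFieldDrift Q b c dis (u s) η
      = (∫ s in (0:ℝ)..t, ∫ q : ℝ × ℝ, b (u s η) q.1 q.2 ∂(Q.map fun η' => (u s η', dis η')))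
        + ∫ s in (0:ℝ)..t, c (u s η) (dis η) := by
  have hmap : ∀ s, (∫ q : ℝ × ℝ, b (u s η) q.1 q.2 ∂(Q.map fun η' => (u s η', dis η')))
      = ∫ η', b (u s η) (u s η') (dis η') ∂Q := fun s =>
    integral_map ((hu.1 s).prodMk hdis).aemeasurable
      (hbmeas.comp (measurable_const.prodMk measurable_id)).aestronglyMeasurable
  simp_rw [hmap]
  exact intervalIntegral.integral_add
    (((continuous_integral_interaction hbbd hbLip hbmeas hdis hu).comp
      ((hu.2 η).prodMk continuous_id)).intervalIntegrable _ _)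
    (((continuous_of_abs_sub_le hcLip (dis η)).comp (hu.2 η)).intervalIntegrable _ _)

theorem isNonlinearSol_iff (hbbd : ∀ x y w, |b x y w| ≤ Cb)
    (hbLip : ∀ w x x' y y', |b x y w - b x' y' w| ≤ K * (|x - x'| + |y - y'|))
    (hbmeas : Measurable fun q : ℝ × ℝ × ℝ => b q.1 q.2.1 q.2.2)
    (hcLip : ∀ w x x', |c x w - c x' w| ≤ K * |x - x'|) (hdis : Measurable dis)
    {T : ℝ} {B : ℝ → Ω → ℝ} {x₀ : Ω → ℝ} (x : ℝ → Ω → ℝ) :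
    IsNonlinearSol Q T b c B x₀ dis x ↔ IsRegularProcess x ∧
      ∀ᵐ η ∂Q, ∀ t ∈ Icc 0 T, x t η = picardStep (meanFieldDrift Q b c dis) x₀ B x t η := by
  rw [IsNonlinearSol, ← and_assoc]
  refine and_congr_right fun hx => ?_
  simp only [picardStep, intervalIntegral_meanFieldDrift hbbd hbLip hbmeas hcLip hdis hx, add_assoc]

end MeanField

end McKeanVlasov

open McKeanVlasov

theorem stmt5_general {Ω : Type*} [MeasurableSpace Ω] (Q : Measure Ω) [IsProbabilityMeasure Q]
    (T : ℝ) (hT : 0 < T) (μ : Measure ℝ)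
    (b : ℝ → ℝ → ℝ → ℝ) (c : ℝ → ℝ → ℝ) (K Cb : ℝ)
    (hbbd : ∀ x y w : ℝ, |b x y w| ≤ Cb)
    (hbLip : ∀ w x x' y y' : ℝ, |b x y w - b x' y' w| ≤ K * (|x - x'| + |y - y'|))
    (hbmeas : Measurable fun q : ℝ × ℝ × ℝ => b q.1 q.2.1 q.2.2)
    (hcLip : ∀ w x x' : ℝ, |c x w - c x' w| ≤ K * |x - x'|)
    (hcmeas : Measurable (Function.uncurry c))
    (hcint : ∃ S : ℝ → ℝ, Integrable S μ ∧ ∀ x w : ℝ, |c x w| ≤ S w)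
    (B : ℝ → Ω → ℝ) (hBcont : ∀ η, Continuous fun t => B t η)
    (hBmeas : ∀ t, Measurable (B t))
    (x₀ : Ω → ℝ) (hx₀ : Measurable x₀)
    (dis : Ω → ℝ) (hdis : Measurable dis) (hdisLaw : Q.map dis = μ) :
    ∃ x : ℝ → Ω → ℝ, IsNonlinearSol Q T b c B x₀ dis x ∧
      ∀ y : ℝ → Ω → ℝ, IsNonlinearSol Q T b c B x₀ dis y →
        ∀ᵐ η ∂Q, ∀ t ∈ Set.Icc (0:ℝ) T, x t η = y t η := by
  obtain ⟨S, hSint, hS⟩ := hcint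
  have hSdis : Integrable (fun η => S (dis η)) Q := by
    subst hdisLaw
    exact hSint.comp_measurable hdis
  lift K to ℝ≥0 using by simpa using (abs_nonneg _).trans (hcLip 0 1 0)
  have hF := isMeanFieldDrift_meanFieldDrift (Q := Q) hbbd hbLip hbmeas hcLip hcmeas hS hdis hSdis
  have hsol := fun x => isNonlinearSol_iff (Q := Q) (T := T) (B := B) (x₀ := x₀)
    hbbd hbLip hbmeas hcLip hdis x
  obtain ⟨x, hx, hxeq⟩ := exists_eq_picardStep hF hx₀ ⟨hBmeas, hBcont⟩ hT.le
  refine ⟨x, (hsol x).2 ⟨hx, ae_of_all _ hxeq⟩, fun y hy => ?_⟩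
  obtain ⟨hy, hyeq⟩ := (hsol y).1 hy
  exact ae_eq_of_eq_picardStep hF hT.le hx hy (ae_of_all _ hxeq) hyeq

/-- pathwise existence and uniqueness for the nonlinear McKean–Vlasov SDE
driven by a continuous process `B` (e.g. a Brownian motion), with bounded Lipschitz
interaction `b` and Lipschitz disorder drift `c`. -/
theorem stmt5 {Ω : Type*} [MeasurableSpace Ω] (Q : Measure Ω) [IsProbabilityMeasure Q]
    (T : ℝ) (hT : 0 < T) (μ : Measure ℝ) [IsProbabilityMeasure μ]
    (b : ℝ → ℝ → ℝ → ℝ) (c : ℝ → ℝ → ℝ) (K Cb : ℝ)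
    (hbper1 : ∀ y w : ℝ, Function.Periodic (fun x => b x y w) (2 * π))
    (hbper2 : ∀ x w : ℝ, Function.Periodic (fun y => b x y w) (2 * π))
    (hbbd : ∀ x y w : ℝ, |b x y w| ≤ Cb)
    (hbLip : ∀ w x x' y y' : ℝ, |b x y w - b x' y' w| ≤ K * (|x - x'| + |y - y'|))
    (hbmeas : Measurable fun q : ℝ × ℝ × ℝ => b q.1 q.2.1 q.2.2)
    (hcper : ∀ w : ℝ, Function.Periodic (fun x => c x w) (2 * π))
    (hcLip : ∀ w x x' : ℝ, |c x w - c x' w| ≤ K * |x - x'|)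
    (hcmeas : Measurable (Function.uncurry c))
    (hcint : ∃ S : ℝ → ℝ, Integrable S μ ∧ ∀ x w : ℝ, |c x w| ≤ S w)
    (B : ℝ → Ω → ℝ) (hBcont : ∀ η, Continuous fun t => B t η)
    (hBmeas : ∀ t, Measurable (B t)) (hB0 : ∀ η, B 0 η = 0)
    (x₀ : Ω → ℝ) (hx₀ : Measurable x₀)
    (dis : Ω → ℝ) (hdis : Measurable dis) (hdisLaw : Q.map dis = μ) :
    ∃ x : ℝ → Ω → ℝ, IsNonlinearSol Q T b c B x₀ dis x ∧
      ∀ y : ℝ → Ω → ℝ, IsNonlinearSol Q T b c B x₀ dis y →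
        ∀ᵐ η ∂Q, ∀ t ∈ Set.Icc (0:ℝ) T, x t η = y t η :=
  stmt5_general Q T hT μ b c K Cb hbbd hbLip hbmeas hcLip hcmeas hcint B hBcont hBmeas x₀ hx₀ dis
    hdis hdisLaw
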